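/- arXiv:1911.09238 — 5 statements merged into one kernel-verified Lean document; each statement's English description precedes it below -/
import Mathlib

section
/- Let c > 0 and let (a_n), (b_n) be sequences of positive real numbers with a_n ≥ c for all n. Suppose the sequence (log₁₀ a_n) is equidistributed mod 1 (i.e., (a_n) is Benford base 10) and that b_n − a_n → 0 as n → ∞. Then (log₁₀ b_n) is equidistributed mod 1, i.e., (b_n) is Benford base 10 as well. -/
open Filter Finset Classical

/-- A sequence `x : ℕ → ℝ` is equidistributed mod 1 if for all `0 ≤ u ≤ v ≤ 1`,
the proportion of `n < N` with `Int.fract (x n) ∈ [u, v)` tends to `v - u`. -/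
def EquidistributedMod1 (x : ℕ → ℝ) : Prop :=
  ∀ u v : ℝ, 0 ≤ u → u ≤ v → v ≤ 1 →
    Tendsto (fun N : ℕ =>
        (((Finset.range N).filter (fun n => Int.fract (x n) ∈ Set.Ico u v)).card : ℝ) / (N : ℝ))
      atTop (nhds (v - u))

/-!
Since `a ≥ c > 0`, `b - a → 0` forces `b / a → 1`, so `log₁₀ b - log₁₀ a → 0`, and it suffices that
equidistribution mod 1 survives perturbations tending to `0`. Once `|y n - x n| ≤ δ`, every `n`
with `Int.fract (x n) ∈ [u + δ, v - δ)` has `Int.fract (y n) ∈ [u, v)`, which bounds the proportions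
for `y` from below; as `[0, u)`, `[u, v)`, `[v, 1)` partition `[0, 1)`, the lower bounds for the
outer two intervals give the upper bound for the middle one.
-/

lemma Int.fract_add_mem_Ico {t d δ u v : ℝ} (hu : 0 ≤ u) (hv : v ≤ 1) (hd : |d| ≤ δ)
    (ht : Int.fract t ∈ Set.Ico (u + δ) (v - δ)) : Int.fract (t + d) ∈ Set.Ico u v := by
  obtain ⟨hd₁, hd₂⟩ := abs_le.mp hd
  obtain ⟨ht₁, ht₂⟩ := ht
  have hfract : Int.fract (t + d) = Int.fract t + d :=
    Int.fract_eq_iff.mpr ⟨by linarith, by linarith, ⌊t⌋, by rw [← Int.self_sub_fract]; ring⟩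
  rw [hfract]
  constructor <;> linarith

noncomputable def fractCount (x : ℕ → ℝ) (u v : ℝ) (N : ℕ) : ℕ :=
  ((range N).filter (fun n => Int.fract (x n) ∈ Set.Ico u v)).card

lemma fractCount_add_fractCount (x : ℕ → ℝ) {u v w : ℝ} (huv : u ≤ v) (hvw : v ≤ w) (N : ℕ) :
    fractCount x u v N + fractCount x v w N = fractCount x u w N := by
  simp_rw [fractCount, ← Set.Ico_union_Ico_eq_Ico huv hvw, Set.mem_union, filter_or]
  refine (card_union_of_disjoint (disjoint_filter_filter' _ _ ?_)).symm
  exact fun p h₁ h₂ n hn => (Set.Ico_disjoint_Ico_same.ne_of_mem (h₁ n hn) (h₂ n hn)) rfl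

lemma fractCount_zero_one (x : ℕ → ℝ) (N : ℕ) : fractCount x 0 1 N = N := by
  simp [fractCount, Int.fract_nonneg, Int.fract_lt_one]

lemma fractCount_le_fractCount_add {x y : ℕ → ℝ} {u v δ : ℝ} {N₀ : ℕ} (hu : 0 ≤ u) (hv : v ≤ 1)
    (hxy : ∀ n ≥ N₀, |y n - x n| ≤ δ) (N : ℕ) :
    fractCount x (u + δ) (v - δ) N ≤ fractCount y u v N + N₀ := by
  have hsub : (range N).filter (fun n => Int.fract (x n) ∈ Set.Ico (u + δ) (v - δ)) ⊆
      (range N).filter (fun n => Int.fract (y n) ∈ Set.Ico u v) ∪ range N₀ := by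
    intro n hn
    rw [mem_filter] at hn
    rcases lt_or_ge n N₀ with hn₀ | hn₀
    · exact mem_union_right _ (mem_range.mpr hn₀)
    · refine mem_union_left _ (mem_filter.mpr ⟨hn.1, ?_⟩)
      simpa using Int.fract_add_mem_Ico hu hv (hxy n hn₀) hn.2
  simpa [fractCount] using (card_le_card hsub).trans (card_union_le _ _)

lemma EquidistributedMod1.eventually_lt_fractCount_div {x y : ℕ → ℝ} (hx : EquidistributedMod1 x)
    (hxy : Tendsto (fun n => y n - x n) atTop (nhds 0)) {u v a : ℝ} (hu : 0 ≤ u) (hv : v ≤ 1)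
    (ha : a < v - u) : ∀ᶠ N : ℕ in atTop, a < fractCount y u v N / N := by
  rcases lt_or_ge a 0 with ha₀ | ha₀
  · exact Eventually.of_forall fun N => ha₀.trans_le (by positivity)
  set δ := (v - u - a) / 3 with hδ
  have hδpos : 0 < δ := by rw [hδ]; linarith
  obtain ⟨N₀, hN₀⟩ := Metric.tendsto_atTop.mp hxy δ hδpos
  have hclose : ∀ n ≥ N₀, |y n - x n| ≤ δ := fun n hn => by
    simpa [Real.dist_eq] using (hN₀ n hn).le
  have hlim : Tendsto (fun N : ℕ => (fractCount x (u + δ) (v - δ) N : ℝ) / N - N₀ / N) atTop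
      (nhds ((v - δ) - (u + δ) - 0)) :=
    (hx _ _ (by linarith) (by linarith) (by linarith)).sub
      (tendsto_const_div_atTop_nhds_zero_nat _)
  filter_upwards [hlim.eventually_const_lt (show a < _ by linarith)] with N hN
  refine hN.trans_le ?_
  rw [← sub_div]
  gcongr
  have := fractCount_le_fractCount_add hu hv hclose N
  rw [sub_le_iff_le_add]
  exact_mod_cast this

theorem EquidistributedMod1.of_tendsto_sub {x y : ℕ → ℝ} (hx : EquidistributedMod1 x)
    (hxy : Tendsto (fun n => y n - x n) atTop (nhds 0)) : EquidistributedMod1 y := by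
  intro u v hu huv hv
  refine tendsto_order.mpr ⟨fun a ha => hx.eventually_lt_fractCount_div hxy hu hv ha,
    fun a ha => ?_⟩
  set ε := (a - (v - u)) / 2 with hε
  have hεpos : 0 < ε := by rw [hε]; linarith
  have hsplit : ∀ N, (fractCount y u v N : ℝ) = N - fractCount y 0 u N - fractCount y v 1 N := by
    intro N
    have hsum : (fractCount y 0 u N + fractCount y u v N + fractCount y v 1 N : ℝ) = N := by
      exact_mod_cast (fractCount_add_fractCount y hu huv N ▸
        fractCount_add_fractCount y (hu.trans huv) hv N).trans (fractCount_zero_one y N)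
    linarith
  filter_upwards
    [hx.eventually_lt_fractCount_div hxy le_rfl (huv.trans hv) (a := u - ε) (by linarith),
    hx.eventually_lt_fractCount_div hxy (hu.trans huv) le_rfl (a := 1 - v - ε) (by linarith),
    eventually_gt_atTop 0] with N h₁ h₂ hN
  have hN' : (0 : ℝ) < N := by exact_mod_cast hN
  rw [lt_div_iff₀ hN'] at h₁ h₂
  have ha' : a * N = (v - u + 2 * ε) * N := by rw [hε]; ring
  change (fractCount y u v N : ℝ) / N < a
  rw [div_lt_iff₀ hN', hsplit]
  linarith

theorem tendsto_log_sub_log_of_tendsto_sub {α : Type*} {l : Filter α} {a b : α → ℝ} {c : ℝ}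
    (hc : 0 < c) (hca : ∀ i, c ≤ a i) (hlim : Tendsto (fun i => b i - a i) l (nhds 0)) :
    Tendsto (fun i => Real.log (b i) - Real.log (a i)) l (nhds 0) := by
  have ha : ∀ i, 0 < a i := fun i => hc.trans_le (hca i)
  have hquot : Tendsto (fun i => (b i - a i) / a i) l (nhds 0) := by
    refine squeeze_zero_norm (fun i => ?_) (by simpa using hlim.abs.div_const c)
    rw [Real.norm_eq_abs, abs_div, abs_of_pos (ha i)]
    gcongr
    exact hca i
  have hratio : Tendsto (fun i => b i / a i) l (nhds 1) :=
    tendsto_sub_nhds_zero_iff.mp <| hquot.congr fun i => by field_simp [(ha i).ne']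
  have hlog : Tendsto (fun i => Real.log (b i / a i)) l (nhds 0) := by
    have h := (Real.continuousAt_log one_ne_zero).tendsto.comp hratio
    rwa [Real.log_one] at h
  refine hlog.congr' ?_
  filter_upwards [hratio.eventually_ne one_ne_zero] with i hi
  exact Real.log_div (div_ne_zero_iff.mp hi).1 (ha i).ne'

theorem benford_of_tendsto_sub_zero_general (c : ℝ) (hc : 0 < c) (a b : ℕ → ℝ)
    (hca : ∀ n, c ≤ a n)
    (hben : EquidistributedMod1 (fun n => Real.logb 10 (a n)))
    (hlim : Tendsto (fun n => b n - a n) atTop (nhds 0)) :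
    EquidistributedMod1 (fun n => Real.logb 10 (b n)) :=
  hben.of_tendsto_sub <| by
    simpa [Real.logb, ← sub_div] using
      (tendsto_log_sub_log_of_tendsto_sub hc hca hlim).div_const (Real.log 10)

/-- If `(a n)` is Benford base 10, bounded below by `c > 0`, and `b n - a n → 0`,
then `(b n)` is Benford base 10. -/
theorem benford_of_tendsto_sub_zero (c : ℝ) (hc : 0 < c) (a b : ℕ → ℝ)
    (ha : ∀ n, 0 < a n) (hb : ∀ n, 0 < b n) (hca : ∀ n, c ≤ a n)
    (hben : EquidistributedMod1 (fun n => Real.logb 10 (a n)))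
    (hlim : Tendsto (fun n => b n - a n) atTop (nhds 0)) :
    EquidistributedMod1 (fun n => Real.logb 10 (b n)) :=
  benford_of_tendsto_sub_zero_general c hc a b hca hben hlim
end

section
/- For a real number α, the sequence (n·α)_{n≥1} is equidistributed mod 1 if and only if α is irrational. -/
/-!
If `α` is irrational, the point `a = α mod 1` has infinite order in `ℝ/ℤ`, so for `k ≠ 0` the Weyl
sum `∑_{n ≤ N} e(k n α)` is a geometric sum with ratio `≠ 1` and is bounded. Since trigonometric
polynomials are dense in `C(ℝ/ℤ, ℂ)`, the empirical measures of `(n α)` converge weakly to Haar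
measure, and the portmanteau theorem turns this into convergence of the proportion of points in
every arc, whose boundary is null. If `α = p/q`, every `n α mod 1` lies in `(1/q)ℤ`, so the
interval `[1/(2q), 1/q)` is never visited.
-/

open Filter Finset Classical

open Topology MeasureTheory
open scoped ENNReal

section EmpiricalMeasure

variable {X : Type*} [MeasurableSpace X]

-- It averages over the first `N + 1` terms, so that it is a probability measure for every `N`.
noncomputable def empiricalMeasure (y : ℕ → X) (N : ℕ) : ProbabilityMeasure X :=
  ⟨((N + 1 : ℕ) : ℝ≥0∞)⁻¹ • ∑ n ∈ range (N + 1), Measure.dirac (y n), ⟨by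
    simp [ENNReal.inv_mul_cancel]⟩⟩

lemma coe_empiricalMeasure_apply [MeasurableSingletonClass X] (y : ℕ → X) (N : ℕ) (s : Set X) :
    (empiricalMeasure y N s : ℝ) = #{n ∈ range (N + 1) | y n ∈ s} / ((N + 1 : ℕ) : ℝ) := by
  rw [ProbabilityMeasure.coeFn_def, ENNReal.coe_toNNReal_eq_toReal, empiricalMeasure,
    ProbabilityMeasure.coe_mk, Measure.smul_apply, smul_eq_mul, ENNReal.toReal_mul,
    ENNReal.toReal_inv, ENNReal.toReal_natCast, Measure.coe_finsetSum, Finset.sum_apply]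
  simp [Measure.dirac_apply, Set.indicator_apply, Finset.sum_boole, div_eq_inv_mul]

lemma integral_empiricalMeasure [MeasurableSingletonClass X] {E : Type*} [NormedAddCommGroup E]
    [NormedSpace ℝ E] [CompleteSpace E] (y : ℕ → X) (N : ℕ) (f : X → E) :
    ∫ x, f x ∂(empiricalMeasure y N : Measure X) =
      ((N + 1 : ℕ) : ℝ)⁻¹ • ∑ n ∈ range (N + 1), f (y n) := by
  rw [empiricalMeasure, ProbabilityMeasure.coe_mk, integral_smul_measure,
    integral_finsetSum_measure fun n _ => integrable_dirac enorm_lt_top, ENNReal.toReal_inv,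
    ENNReal.toReal_natCast]
  simp

end EmpiricalMeasure

section WeakConvergence

variable {X 𝕜 : Type*} [TopologicalSpace X] [CompactSpace X] [MeasurableSpace X]
  [OpensMeasurableSpace X] [RCLike 𝕜]

lemma ContinuousMap.integrable (μ : Measure X) [IsFiniteMeasure μ] (f : C(X, 𝕜)) :
    Integrable f μ :=
  (BoundedContinuousFunction.mkOfCompact f).integrable μ

lemma ContinuousMap.lipschitzWith_one_integral (μ : Measure X) [IsProbabilityMeasure μ] :
    LipschitzWith 1 fun f : C(X, 𝕜) => ∫ x, f x ∂μ := by
  refine LipschitzWith.of_dist_le_mul fun f g => ?_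
  rw [NNReal.coe_one, one_mul, dist_eq_norm, ← integral_sub (f.integrable μ) (g.integrable μ),
    dist_eq_norm, ← BoundedContinuousFunction.norm_mkOfCompact]
  exact BoundedContinuousFunction.norm_integral_le_norm μ
    (BoundedContinuousFunction.mkOfCompact (f - g))

theorem ProbabilityMeasure.tendsto_of_tendsto_integral_of_dense_span {ι : Type*} {L : Filter ι}
    {μs : ι → ProbabilityMeasure X} {μ : ProbabilityMeasure X} {s : Set C(X, 𝕜)}
    (hs : (Submodule.span 𝕜 s).topologicalClosure = ⊤)
    (h : ∀ f ∈ s,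
      Tendsto (fun i => ∫ x, f x ∂(μs i : Measure X)) L (𝓝 (∫ x, f x ∂(μ : Measure X)))) :
    Tendsto μs L (𝓝 μ) := by
  let S : Submodule 𝕜 C(X, 𝕜) :=
    { carrier :=
        {f | Tendsto (fun i => ∫ x, f x ∂(μs i : Measure X)) L (𝓝 (∫ x, f x ∂(μ : Measure X)))}
      add_mem' := fun {f g} hf hg => by
        simpa only [Set.mem_ofPred_eq, ContinuousMap.add_apply,
          integral_add (f.integrable _) (g.integrable _)] using hf.add hg
      zero_mem' := by simpa using tendsto_const_nhds
      smul_mem' := fun c f hf => by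
        simpa only [Set.mem_ofPred_eq, ContinuousMap.smul_apply, integral_smul] using
          hf.const_smul c }
  have hS : IsClosed (S : Set C(X, 𝕜)) :=
    (LipschitzWith.uniformEquicontinuous _ 1 fun i =>
      ContinuousMap.lipschitzWith_one_integral (μs i : Measure X)).equicontinuous
      |>.isClosed_setOfPred_tendsto (ContinuousMap.lipschitzWith_one_integral _).continuous
  have hS_top : S = ⊤ := by
    rw [eq_top_iff, ← hs]
    exact Submodule.topologicalClosure_minimal _ (Submodule.span_le.2 h) hS
  rw [ProbabilityMeasure.tendsto_iff_forall_integral_rclike_tendsto 𝕜]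
  intro f
  exact (hS_top ▸ Submodule.mem_top : f.toContinuousMap ∈ S)

end WeakConvergence

lemma tendsto_inv_smul_geom_sum {𝕜 : Type*} [NormedField 𝕜] [NormedSpace ℝ 𝕜] {z : 𝕜}
    (hz : ‖z‖ ≤ 1) (hz1 : z ≠ 1) :
    Tendsto (fun N : ℕ => (N : ℝ)⁻¹ • ∑ n ∈ range N, z ^ n) atTop (𝓝 0) := by
  have hz1' : 0 < ‖z - 1‖ := norm_pos_iff.2 (sub_ne_zero.2 hz1)
  have bound : ∀ N : ℕ, ‖(N : ℝ)⁻¹ • ∑ n ∈ range N, z ^ n‖ ≤ (N : ℝ)⁻¹ * (2 / ‖z - 1‖) := by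
    intro N
    rw [norm_smul, norm_inv, Real.norm_natCast, geom_sum_eq hz1, norm_div]
    gcongr
    calc ‖z ^ N - 1‖ ≤ ‖z‖ ^ N + 1 := by simpa using norm_sub_le (z ^ N) 1
      _ ≤ 2 := by linarith [pow_le_one₀ (norm_nonneg z) hz (n := N)]
  refine squeeze_zero_norm bound ?_
  simpa using (tendsto_inv_atTop_zero.comp tendsto_natCast_atTop_atTop).mul_const (2 / ‖z - 1‖)

namespace AddCircle

variable {T : ℝ}

lemma fourier_nsmul (k : ℤ) (n : ℕ) (a : AddCircle T) : fourier k (n • a) = fourier k a ^ n := by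
  rw [fourier_apply, fourier_apply, smul_comm, toCircle_nsmul, Circle.coe_pow]

variable [Fact (0 < T)]

lemma integral_fourier_haarAddCircle (k : ℤ) :
    ∫ x : AddCircle T, fourier k x ∂haarAddCircle = if k = 0 then (1 : ℂ) else 0 := by
  have := congr_fun (@fourierCoeff_fourier T _ k) 0
  simp only [fourierCoeff, neg_zero, fourier_zero, one_smul] at this
  rw [this, Pi.single_apply]
  simp only [eq_comm]

lemma fourier_apply_ne_one {a : AddCircle T} (ha : ¬IsOfFinAddOrder a) {k : ℤ} (hk : k ≠ 0) :
    fourier k a ≠ 1 := by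
  rw [fourier_apply, ← Circle.coe_one, Ne, Circle.coe_inj, ← toCircle_zero (T := T),
    (injective_toCircle (Fact.out : 0 < T).ne').eq_iff]
  exact fun h => ha (isOfFinAddOrder_iff_zsmul_eq_zero.2 ⟨k, hk, h⟩)

theorem tendsto_empiricalMeasure_nsmul {a : AddCircle T} (ha : ¬IsOfFinAddOrder a) :
    Tendsto (empiricalMeasure fun n : ℕ => n • a) atTop (𝓝 ⟨haarAddCircle, inferInstance⟩) := by
  refine ProbabilityMeasure.tendsto_of_tendsto_integral_of_dense_span span_fourier_closure_eq_top ?_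
  rintro _ ⟨k, rfl⟩
  rw [ProbabilityMeasure.coe_mk, integral_fourier_haarAddCircle]
  split_ifs with hk
  · subst hk
    simp
  · simp only [integral_empiricalMeasure, fourier_nsmul]
    exact (tendsto_inv_smul_geom_sum (Circle.norm_coe _).le (fourier_apply_ne_one ha hk)).comp
      (tendsto_add_atTop_nat 1)

end AddCircle

namespace AddCircle

open Set

variable {T : ℝ}

lemma frontier_coe_image_Ico_subset (u v : ℝ) :
    frontier ((↑) '' Ico u v : Set (AddCircle T)) ⊆ {(u : AddCircle T), (v : AddCircle T)} := by
  have hcl : closure ((↑) '' Ico u v : Set (AddCircle T)) ⊆ (↑) '' Icc u v :=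
    closure_minimal (image_mono Ico_subset_Icc_self)
      (isCompact_Icc.image QuotientAddGroup.continuous_mk).isClosed
  have hint : ((↑) '' Ioo u v : Set (AddCircle T)) ⊆ interior ((↑) '' Ico u v) :=
    interior_maximal (image_mono Ioo_subset_Ico_self) (QuotientAddGroup.isOpenMap_coe _ isOpen_Ioo)
  rintro _ ⟨hz, hz'⟩
  obtain ⟨x, hx, rfl⟩ := hcl hz
  rcases hx.1.eq_or_lt with rfl | hux
  · exact mem_insert _ _
  rcases hx.2.eq_or_lt with rfl | hxv
  · exact mem_insert_of_mem _ rfl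
  exact absurd (hint ⟨x, ⟨hux, hxv⟩, rfl⟩) hz'

variable [Fact (0 < T)]

lemma volume_coe_image_of_subset_Ioc {t : ℝ} {s : Set ℝ} (hs : s ⊆ Ioc t (t + T))
    (hm : MeasurableSet ((↑) '' s : Set (AddCircle T))) :
    volume ((↑) '' s : Set (AddCircle T)) = volume s := by
  rw [add_projection_respects_measure T t hm]
  congr 1
  ext y
  constructor
  · rintro ⟨⟨x, hx, hxy⟩, hy⟩
    rwa [← (coe_eq_coe_iff_of_mem_Ioc (hs hx) hy).1 hxy]
  · exact fun hy => ⟨⟨y, hy, rfl⟩, hs hy⟩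

instance : NullSingletonClass (volume : Measure (AddCircle T)) where
  measure_singleton z := by
    obtain ⟨u, rfl⟩ := QuotientAddGroup.mk_surjective z
    have hu : {u} ⊆ Ioc (u - T) (u - T + T) := by
      simpa using (Fact.out : 0 < T)
    simpa using volume_coe_image_of_subset_Ioc hu (by simp)

lemma volume_coe_image_Ico {u v : ℝ} (hv : v ≤ u + T) :
    volume ((↑) '' Ico u v : Set (AddCircle T)) = ENNReal.ofReal (v - u) := by
  have hIoo : volume ((↑) '' Ioo u v : Set (AddCircle T)) = ENNReal.ofReal (v - u) := by
    rw [volume_coe_image_of_subset_Ioc (t := u) (fun x hx => ⟨hx.1, hx.2.le.trans hv⟩)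
      (QuotientAddGroup.isOpenMap_coe _ isOpen_Ioo).measurableSet, Real.volume_Ioo]
  refine le_antisymm ?_ (hIoo ▸ measure_mono (image_mono Ioo_subset_Ico_self))
  calc volume ((↑) '' Ico u v : Set (AddCircle T))
      ≤ volume (insert (u : AddCircle T) ((↑) '' Ioo u v)) := by
        refine measure_mono ?_
        rintro _ ⟨x, hx, rfl⟩
        rcases hx.1.eq_or_lt with rfl | hux
        · exact mem_insert _ _
        · exact mem_insert_of_mem _ ⟨x, ⟨hux, hx.2⟩, rfl⟩
    _ = ENNReal.ofReal (v - u) := by rw [measure_congr (insert_ae_eq_self _ _), hIoo]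

end AddCircle

theorem equidistributedMod1_of_tendsto_empiricalMeasure {x : ℕ → ℝ}
    (h : Tendsto (empiricalMeasure fun n => (x n : UnitAddCircle)) atTop
      (𝓝 ⟨AddCircle.haarAddCircle, inferInstance⟩)) :
    EquidistributedMod1 x := by
  intro u v hu huv hv
  set E : Set UnitAddCircle := (↑) '' Set.Ico u v
  have hvol : (AddCircle.haarAddCircle : Measure UnitAddCircle) = volume := by
    rw [AddCircle.volume_eq_smul_haarAddCircle, ENNReal.ofReal_one, one_smul]
  have hmem : ∀ y : ℝ, (y : UnitAddCircle) ∈ E ↔ Int.fract y ∈ Set.Ico u v := by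
    refine fun y => ⟨?_, fun hy => ⟨_, hy, AddCircle.coe_fract y⟩⟩
    rintro ⟨w, hw, hwy⟩
    have hw' : w ∈ Set.Ico (0 : ℝ) (0 + 1) := ⟨hu.trans hw.1, by linarith [hw.2]⟩
    have hy' : Int.fract y ∈ Set.Ico (0 : ℝ) (0 + 1) :=
      ⟨Int.fract_nonneg y, by simpa using Int.fract_lt_one y⟩
    rw [← AddCircle.coe_fract y] at hwy
    rwa [← (AddCircle.coe_eq_coe_iff_of_mem_Ico hw' hy').1 hwy]
  have hfr : (AddCircle.haarAddCircle : Measure UnitAddCircle) (frontier E) = 0 := by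
    rw [hvol]
    exact measure_mono_null (AddCircle.frontier_coe_image_Ico_subset u v)
      ((Set.toFinite _).measure_zero _)
  have hlim := NNReal.tendsto_coe.2 <|
    ProbabilityMeasure.tendsto_measure_of_null_frontier_of_tendsto h (E := E) (by simp [hfr])
  rw [← tendsto_add_atTop_iff_nat 1]
  simp only [coe_empiricalMeasure_apply, hmem] at hlim
  convert hlim using 2
  rw [ProbabilityMeasure.mk_apply, ENNReal.coe_toNNReal_eq_toReal, hvol,
    AddCircle.volume_coe_image_Ico (by linarith), ENNReal.toReal_ofReal (sub_nonneg.2 huv)]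

lemma EquidistributedMod1.exists_fract_mem_Ico {x : ℕ → ℝ} (h : EquidistributedMod1 x) {u v : ℝ}
    (hu : 0 ≤ u) (huv : u < v) (hv : v ≤ 1) : ∃ n, Int.fract (x n) ∈ Set.Ico u v := by
  by_contra! hx
  have := h u v hu huv.le hv
  simp only [hx, filter_false, card_empty, Nat.cast_zero, zero_div] at this
  exact (sub_pos.2 huv).ne (tendsto_nhds_unique tendsto_const_nhds this)

lemma exists_intCast_eq_den_mul_fract_mul (q : ℚ) (n : ℕ) :
    ∃ m : ℤ, (q.den : ℝ) * Int.fract ((n : ℝ) * q) = m := by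
  refine ⟨n * q.num - q.den * ⌊(n : ℝ) * q⌋, ?_⟩
  have hq : (q.den : ℝ) * q = q.num := by exact_mod_cast q.den_mul_eq_num
  rw [Int.fract]
  push_cast
  linear_combination (n : ℝ) * hq

theorem not_equidistributedMod1_mul_rat (q : ℚ) :
    ¬EquidistributedMod1 fun n : ℕ => (n : ℝ) * q := by
  intro h
  have hd : (0 : ℝ) < q.den := by exact_mod_cast q.pos
  obtain ⟨n, hn₁, hn₂⟩ := h.exists_fract_mem_Ico (u := 1 / (2 * q.den)) (v := 1 / q.den)
    (by positivity) (by gcongr; linarith) (div_le_one_of_le₀ (by exact_mod_cast q.pos) hd.le)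
  obtain ⟨m, hm⟩ := exists_intCast_eq_den_mul_fract_mul q n
  have h₁ : (1 : ℝ) / 2 ≤ m := by
    rw [div_le_iff₀' (by positivity)] at hn₁
    linarith
  have h₂ : (m : ℝ) < 1 := by
    rwa [← hm, ← lt_div_iff₀' hd]
  have : (0 : ℤ) < m := by exact_mod_cast (by linarith : (0 : ℝ) < m)
  have : m < 1 := by exact_mod_cast h₂
  omega

/-- Weyl: `(n·α)` is equidistributed mod 1 if and only if `α` is irrational. -/
theorem nsmul_equidistributed_iff_irrational (α : ℝ) :
    EquidistributedMod1 (fun n : ℕ => (n : ℝ) * α) ↔ Irrational α := by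
  refine ⟨fun h => ?_, fun hα => equidistributedMod1_of_tendsto_empiricalMeasure ?_⟩
  · rintro ⟨q, rfl⟩
    exact not_equidistributedMod1_mul_rat q h
  · have ha : ¬IsOfFinAddOrder (α : UnitAddCircle) := by
      rw [AddCircle.not_isOfFinAddOrder_iff_forall_rat_ne_div, div_one]
      exact fun q => (hα.ne_rat q).symm
    simpa only [← nsmul_eq_mul, ← AddCircle.coe_nsmul] using
      AddCircle.tendsto_empiricalMeasure_nsmul ha
end

section
/- Let p : ℕ → ℝ be a function with p(n) → 0 as n → ∞. Then the sums q(n) = Σ_{k=2}^{n} ∏_{i=k}^{n} |p(i)| satisfy q(n) → 0 as n → ∞. -/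
open Filter Finset Topology

/-!
Writing `q n = ∑_{k=2}^{n} ∏_{i=k}^{n} |p i|`, peeling off the factor `|p (n+1)|` gives the
recursion `q (n+1) = |p (n+1)| * (q n + 1)`. Once `|p| ≤ 1/2` this keeps `q` below
`max (q N) 1`, and then the recursion itself bounds `q (n+1)` by a constant times `|p (n+1)|`.
-/

theorem sum_Icc_prod_Icc_succ_top {R : Type*} [CommSemiring R] (f : ℕ → R) {m n : ℕ}
    (hmn : m ≤ n + 1) :
    ∑ k ∈ Icc m (n + 1), ∏ i ∈ Icc k (n + 1), f i
      = f (n + 1) * (∑ k ∈ Icc m n, ∏ i ∈ Icc k n, f i + 1) := by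
  have hpeel : ∀ k ∈ Icc m n, ∏ i ∈ Icc k (n + 1), f i = (∏ i ∈ Icc k n, f i) * f (n + 1) :=
    fun k hk => prod_Icc_succ_top (by grind) f
  rw [sum_Icc_succ_top hmn, sum_congr rfl hpeel, ← sum_mul, Icc_self, prod_singleton]
  ring

section Recursion

variable {a q : ℕ → ℝ}

theorem exists_eventually_le_of_le_mul_add_one (hq : ∀ n, 0 ≤ q n)
    (ha : Tendsto a atTop (𝓝 0)) (hrec : ∀ᶠ n in atTop, q (n + 1) ≤ a (n + 1) * (q n + 1)) :
    ∃ M, ∀ᶠ n in atTop, q n ≤ M := by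
  have ha' : Tendsto (fun n => |a (n + 1)|) atTop (𝓝 0) := by
    simpa using ((tendsto_add_atTop_iff_nat 1).mpr ha).abs
  have hsmall : ∀ᶠ n in atTop, |a (n + 1)| ≤ 1 / 2 := ha'.eventually_le_const (by norm_num)
  obtain ⟨N, hN⟩ := eventually_atTop.mp (hsmall.and hrec)
  refine ⟨max (q N) 1, eventually_atTop.mpr ⟨N, fun n hn => ?_⟩⟩
  induction n, hn using Nat.le_induction with
  | base => exact le_max_left _ _
  | succ n hn ih =>
    obtain ⟨hsmall, hrec⟩ := hN n hn
    calc q (n + 1) ≤ |a (n + 1)| * (q n + 1) :=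
          hrec.trans (mul_le_mul_of_nonneg_right (le_abs_self _) (by linarith [hq n]))
      _ ≤ 1 / 2 * (max (q N) 1 + 1) := by gcongr; linarith [hq n]
      _ ≤ max (q N) 1 := by linarith [le_max_right (q N) 1]

theorem tendsto_zero_of_le_mul_add_one (hq : ∀ n, 0 ≤ q n)
    (ha : Tendsto a atTop (𝓝 0)) (hrec : ∀ᶠ n in atTop, q (n + 1) ≤ a (n + 1) * (q n + 1)) :
    Tendsto q atTop (𝓝 0) := by
  obtain ⟨M, hM⟩ := exists_eventually_le_of_le_mul_add_one hq ha hrec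
  rw [← tendsto_add_atTop_iff_nat 1]
  have hbound : ∀ᶠ n in atTop, q (n + 1) ≤ (M + 1) * |a (n + 1)| := by
    filter_upwards [hM, hrec] with n hMn hrecn
    calc q (n + 1) ≤ |a (n + 1)| * (q n + 1) :=
          hrecn.trans (mul_le_mul_of_nonneg_right (le_abs_self _) (by linarith [hq n]))
      _ ≤ (M + 1) * |a (n + 1)| := by rw [mul_comm]; gcongr
  have hlim : Tendsto (fun n => (M + 1) * |a (n + 1)|) atTop (𝓝 0) := by
    simpa using ((tendsto_add_atTop_iff_nat 1).mpr ha).abs.const_mul (M + 1)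
  exact squeeze_zero' (.of_forall fun n => hq (n + 1)) hbound hlim

end Recursion

/-- If `p n → 0`, then the sums `q n = Σ_{k=2}^{n} ∏_{i=k}^{n} |p i|` tend to `0`. -/
theorem sum_prod_abs_tendsto_zero (p : ℕ → ℝ)
    (hp : Tendsto p atTop (nhds 0)) :
    Tendsto (fun n : ℕ => ∑ k ∈ Finset.Icc 2 n, ∏ i ∈ Finset.Icc k n, |p i|)
      atTop (nhds 0) := by
  refine tendsto_zero_of_le_mul_add_one (a := fun n => |p n|)
    (fun n => sum_nonneg fun k _ => prod_nonneg fun i _ => abs_nonneg _)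
    (by simpa using hp.abs) ?_
  filter_upwards [eventually_ge_atTop 1] with n hn
  exact (sum_Icc_prod_Icc_succ_top (fun i => |p i|) (by omega)).le
end

section
/- Let λ, μ : ℕ → ℝ with μ(n) ≠ 0 for all n ≥ 2 and λ(n)/μ(n) → 0 as n → ∞. Let a : ℕ → ℝ satisfy a_{n+1} − λ(n)a_n = μ(n)(a_n − λ(n−1)a_{n−1}) for all n ≥ 2, and suppose b₁ := a₂ − λ(1)a₁ ≠ 0. Define the main term r(n) = b₁·∏_{i=2}^{n} μ(i). Then a_{n+1}/r(n) → 1 as n → ∞; in particular a_n ≠ 0 for all sufficiently large n and log₁₀|a_{n+1}| − log₁₀|r(n)| → 0. -/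
open Filter Finset

/-- If `μ` is nonvanishing (for `n ≥ 2`), `λ(n)/μ(n) → 0`, the sequence `a` satisfies
`a (n+1) - λ(n) a n = μ(n) (a n - λ(n-1) a (n-1))` for `n ≥ 2`, and
`b₁ = a₂ - λ(1) a₁ ≠ 0`, then with main term `r n = b₁ ∏_{i=2}^n μ(i)` we have
`a (n+1) / r n → 1`; in particular `a n ≠ 0` eventually and
`log₁₀ |a (n+1)| - log₁₀ |r n| → 0`. -/
theorem main_term_dominates (l μ : ℕ → ℝ)
    (hμ : ∀ n : ℕ, 2 ≤ n → μ n ≠ 0)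
    (hp : Tendsto (fun n : ℕ => l n / μ n) atTop (nhds 0))
    (a : ℕ → ℝ)
    (hrec : ∀ n : ℕ, 2 ≤ n → a (n + 1) - l n * a n = μ n * (a n - l (n - 1) * a (n - 1)))
    (hb : a 2 - l 1 * a 1 ≠ 0)
    (r : ℕ → ℝ) (hr : ∀ n : ℕ, r n = (a 2 - l 1 * a 1) * ∏ i ∈ Finset.Icc 2 n, μ i) :
    Tendsto (fun n : ℕ => a (n + 1) / r n) atTop (nhds 1) ∧
      (∃ N : ℕ, ∀ n, N ≤ n → a n ≠ 0) ∧
      Tendsto (fun n : ℕ => Real.logb 10 |a (n + 1)| - Real.logb 10 |r n|)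
        atTop (nhds 0) := by
  have hrne : ∀ n : ℕ, r n ≠ 0 := by
    intro n
    rw [hr]
    exact mul_ne_zero hb (Finset.prod_ne_zero_iff.mpr
      (fun i hi => hμ i (Finset.mem_Icc.mp hi).1))
  have hrsucc : ∀ n : ℕ, 1 ≤ n → r (n + 1) = μ (n + 1) * r n := by
    intro n hn
    rw [hr, hr, Finset.prod_Icc_succ_top (by omega : 2 ≤ n + 1)]
    ring
  have hkey : ∀ n : ℕ, 1 ≤ n → r n = a (n + 1) - l n * a n := by
    intro n hn
    induction n with
    | zero => omega
    | succ m ih =>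
      rcases Nat.lt_or_ge m 1 with hm | hm
      · interval_cases m
        rw [hr]
        simp
      · have h2 : 2 ≤ m + 1 := by omega
        have hre := hrec (m + 1) h2
        have hm1 : m + 1 - 1 = m := by omega
        rw [hm1] at hre
        rw [← ih hm] at hre
        rw [hrsucc m hm]
        linarith
  set x : ℕ → ℝ := fun n => a (n + 1) / r n with hxdef
  have hx : ∀ n : ℕ, 1 ≤ n → x (n + 1) = 1 + (l (n + 1) / μ (n + 1)) * x n := by
    intro n hn
    have h1 := hkey (n + 1) (by omega)
    have h2 := hrsucc n hn
    have hμn := hμ (n + 1) (by omega)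
    have hrn := hrne n
    have ha : a (n + 2) = μ (n + 1) * r n + l (n + 1) * a (n + 1) := by
      rw [h2] at h1; linarith
    show a (n + 2) / r (n + 1) = 1 + (l (n + 1) / μ (n + 1)) * (a (n + 1) / r n)
    rw [ha, h2]
    field_simp
  -- choose N where |l/μ| ≤ 1/2
  obtain ⟨N0, hN0⟩ := (Metric.tendsto_atTop.mp hp (1/2) (by norm_num))
  set N : ℕ := max N0 1 with hNdef
  have hN : ∀ n, N ≤ n → |l n / μ n| ≤ 1/2 := by
    intro n hn
    have := hN0 n (le_trans (le_max_left _ _) hn)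
    rw [Real.dist_eq, sub_zero] at this
    linarith
  set M : ℝ := max (|x N|) 2 with hMdef
  have hM2 : (2:ℝ) ≤ M := le_max_right _ _
  have hbound : ∀ k : ℕ, |x (N + k)| ≤ M := by
    intro k
    induction k with
    | zero =>
      rw [Nat.add_zero]
      exact le_max_left _ _
    | succ k ih =>
      have h1 : 1 ≤ N + k := le_trans (le_max_right _ _) (Nat.le_add_right _ _)
      have hxx := hx (N + k) h1
      have hε := hN (N + k + 1) (by omega)
      show |x (N + k + 1)| ≤ M
      have habs : |x (N + k + 1)| ≤ 1 + (1/2) * M := by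
        rw [hxx]
        calc |1 + l (N + k + 1) / μ (N + k + 1) * x (N + k)|
            ≤ |(1:ℝ)| + |l (N + k + 1) / μ (N + k + 1) * x (N + k)| := abs_add_le _ _
          _ ≤ 1 + (1/2) * M := by
              rw [abs_one, abs_mul]
              have h0 : (0:ℝ) ≤ |x (N + k)| := abs_nonneg _
              have h0' : (0:ℝ) ≤ |l (N + k + 1) / μ (N + k + 1)| := abs_nonneg _
              nlinarith
      linarith
  have htend : Tendsto x atTop (nhds 1) := by
    have hle : ∀ᶠ n in atTop, |x n - 1| ≤ M * |l n / μ n| := by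
      filter_upwards [eventually_ge_atTop (N + 1)] with n hn
      have h1 : 1 ≤ n - 1 := by omega
      have hxr := hx (n - 1) h1
      rw [show n - 1 + 1 = n by omega] at hxr
      have hx1 : x n - 1 = (l n / μ n) * x (n - 1) := by rw [hxr]; ring
      rw [hx1, abs_mul]
      have hb2 : |x (n - 1)| ≤ M := by
        have := hbound (n - 1 - N)
        rwa [show N + (n - 1 - N) = n - 1 by omega] at this
      have h0 : (0:ℝ) ≤ |l n / μ n| := abs_nonneg _
      calc |l n / μ n| * |x (n - 1)| ≤ |l n / μ n| * M :=
            mul_le_mul_of_nonneg_left hb2 h0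
        _ = M * |l n / μ n| := by ring
    have hg : Tendsto (fun n : ℕ => M * |l n / μ n|) atTop (nhds 0) := by
      simpa using hp.abs.const_mul M
    have habs : Tendsto (fun n => |x n - 1|) atTop (nhds 0) :=
      squeeze_zero' (Eventually.of_forall fun n => abs_nonneg _) hle hg
    rw [tendsto_iff_norm_sub_tendsto_zero]
    simpa [Real.norm_eq_abs] using habs
  have hane : ∀ᶠ n in atTop, a (n + 1) ≠ 0 := by
    filter_upwards [htend.eventually_ne one_ne_zero] with n hn
    intro h
    apply hn
    show a (n + 1) / r n = 0
    rw [h, zero_div]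
  obtain ⟨N1, hN1⟩ := eventually_atTop.mp hane
  refine ⟨htend, ⟨N1 + 1, fun n hn => ?_⟩, ?_⟩
  · have := hN1 (n - 1) (by omega)
    rwa [show n - 1 + 1 = n by omega] at this
  · have hlog : Tendsto (fun n : ℕ => Real.logb 10 |x n|) atTop (nhds 0) := by
      have hcont : ContinuousAt (Real.logb 10) 1 := Real.continuousAt_logb one_ne_zero
      have h2 : Tendsto (fun n : ℕ => |x n|) atTop (nhds 1) := by simpa using htend.abs
      have h' : Tendsto (fun n : ℕ => Real.logb 10 |x n|) atTop (nhds (Real.logb 10 1)) :=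
        hcont.tendsto.comp h2
      simpa [Real.logb_one] using h'
    apply hlog.congr'
    filter_upwards [hane] with n hn
    have hxn : |x n| = |a (n + 1)| / |r n| := by
      rw [show x n = a (n + 1) / r n from rfl, abs_div]
    rw [hxn, Real.logb_div (abs_ne_zero.mpr hn) (abs_ne_zero.mpr (hrne n))]
end

section
/- Let f, g : ℕ → ℝ with g(n) ≠ 0 for all n ≥ 2, and let a₁, a₂ ∈ ℝ with (a₁, a₂) ≠ (0, 0). Then there exist functions λ, μ : ℕ → ℝ satisfying f(n) = λ(n) + μ(n) and g(n) = −λ(n−1)μ(n) for all n ≥ 2, such that the sequence (a_n) defined by the initial values a₁, a₂ and the recurrence a_{n+1} = f(n)a_n + g(n)a_{n−1} for n ≥ 2 has b_n := a_{n+1} − λ(n)a_n ≠ 0 for every n ≥ 1. -/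
/-!
Any solution `q` of the recurrence that vanishes nowhere factors the recurrence operator via
`λ n = q (n + 1) / q n`, `μ n = f n - λ n`, and then `b n = C n / q n`, where `C` is the
Casoratian of `a` and `q`. Since `g` does not vanish, `C` never vanishes once `a` and `q` are
independent. Take a solution `w` independent of `a`; then `q = w + t a` is independent of `a` for
every `t`, and each `q n` vanishes for at most one `t`, so some `t` outside a countable set works.
-/

namespace SecondOrderRec

variable {K : Type*} [Field K]

def IsSolution (f g : ℕ → K) (u : ℕ → K) : Prop :=
  ∀ n, 2 ≤ n → u (n + 1) = f n * u n + g n * u (n - 1)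

/-- The value at `0` is a placeholder: the recurrence only links the terms from index `1` on. -/
def solution (f g : ℕ → K) (x y : K) : ℕ → K
  | 0 => 0
  | 1 => x
  | 2 => y
  | n + 3 => f (n + 2) * solution f g x y (n + 2) + g (n + 2) * solution f g x y (n + 1)

def casoratian (u v : ℕ → K) (n : ℕ) : K :=
  u (n + 1) * v n - u n * v (n + 1)

variable {f g : ℕ → K}

theorem isSolution_solution (x y : K) : IsSolution f g (solution f g x y) := by
  intro n hn
  obtain ⟨m, rfl⟩ := Nat.exists_eq_add_of_le' hn
  rfl

theorem IsSolution.add_mul {u v : ℕ → K} (hu : IsSolution f g u) (hv : IsSolution f g v) (t : K) :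
    IsSolution f g (fun n => u n + t * v n) := by
  intro n hn
  simp only [hu n hn, hv n hn]
  ring

theorem casoratian_add_mul_self (u v : ℕ → K) (t : K) (n : ℕ) :
    casoratian u (fun n => v n + t * u n) n = casoratian u v n := by
  simp only [casoratian]
  ring

theorem casoratian_succ {u v : ℕ → K} (hu : IsSolution f g u) (hv : IsSolution f g v) {n : ℕ}
    (hn : 1 ≤ n) : casoratian u v (n + 1) = -g (n + 1) * casoratian u v n := by
  simp only [casoratian, hu (n + 1) (by omega), hv (n + 1) (by omega), Nat.add_sub_cancel]
  ring

theorem casoratian_ne_zero (hg : ∀ n, 2 ≤ n → g n ≠ 0) {u v : ℕ → K} (hu : IsSolution f g u)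
    (hv : IsSolution f g v) (h₁ : casoratian u v 1 ≠ 0) {n : ℕ} (hn : 1 ≤ n) :
    casoratian u v n ≠ 0 := by
  induction n, hn using Nat.le_induction with
  | base => exact h₁
  | succ m hm ih =>
    rw [casoratian_succ hu hv hm]
    exact mul_ne_zero (neg_ne_zero.2 (hg (m + 1) (by omega))) ih

theorem ne_zero_or_ne_zero_of_casoratian_ne_zero {u v : ℕ → K} {n : ℕ}
    (h : casoratian u v (n + 1) ≠ 0) : v (n + 1) ≠ 0 ∨ u (n + 1) ≠ 0 := by
  by_contra! h0
  simp [casoratian, h0.1, h0.2] at h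

theorem sub_div_mul_eq_casoratian_div (u : ℕ → K) {q : ℕ → K} {n : ℕ} (hq : q n ≠ 0) :
    u (n + 1) - q (n + 1) / q n * u n = casoratian u q n / q n := by
  simp only [casoratian]
  field_simp

/-- With `λ n = q (n + 1) / q n` and `μ n = f n - λ n`, this is `g n = -(λ (n - 1) * μ n)`. -/
theorem IsSolution.factorization {q : ℕ → K} (hq : IsSolution f g q) (hq₀ : ∀ n, 1 ≤ n → q n ≠ 0)
    {n : ℕ} (hn : 2 ≤ n) :
    g n = -(q (n - 1 + 1) / q (n - 1) * (f n - q (n + 1) / q n)) := by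
  obtain ⟨m, rfl⟩ := Nat.exists_eq_add_of_le' hn
  have h₁ := hq₀ (m + 1) (by omega)
  have h₂ := hq₀ (m + 2) (by omega)
  rw [hq (m + 2) hn, show m + 2 - 1 = m + 1 from rfl]
  field_simp
  ring

end SecondOrderRec

theorem exists_forall_add_mul_ne_zero {K ι : Type*} [Field K] [Uncountable K] [Countable ι]
    (u v : ι → K) (h : ∀ i, u i ≠ 0 ∨ v i ≠ 0) : ∃ t : K, ∀ i, u i + t * v i ≠ 0 := by
  have hbad : (⋃ i, {t : K | u i + t * v i = 0}).Countable := by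
    refine Set.countable_iUnion fun i => Set.Subsingleton.countable ?_
    intro s (hs : u i + s * v i = 0) t (ht : u i + t * v i = 0)
    by_cases hv : v i = 0
    · exact absurd (by simpa [hv] using hs) ((h i).resolve_right (not_not.2 hv))
    · exact mul_right_cancel₀ hv (by linear_combination hs - ht)
  by_contra! hall
  refine Set.not_countable_univ (hbad.mono fun t _ => ?_)
  obtain ⟨i, hi⟩ := hall t
  exact Set.mem_iUnion.2 ⟨i, hi⟩

open SecondOrderRec

/-- Given `f, g` with `g` nonvanishing for `n ≥ 2` and initial values `(a₁, a₂) ≠ (0, 0)`,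
there are auxiliary functions `λ, μ` such that the auxiliary sequence
`b n = a (n+1) - λ(n) a n` of the recurrent sequence `a` never vanishes (for `n ≥ 1`). -/
theorem exists_aux_functions_b_nonzero (f g : ℕ → ℝ)
    (hg : ∀ n : ℕ, 2 ≤ n → g n ≠ 0)
    (a₁ a₂ : ℝ) (h : ¬(a₁ = 0 ∧ a₂ = 0))
    (a : ℕ → ℝ) (ha1 : a 1 = a₁) (ha2 : a 2 = a₂)
    (hrec : ∀ n : ℕ, 2 ≤ n → a (n + 1) = f n * a n + g n * a (n - 1)) :
    ∃ l μ : ℕ → ℝ,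
      (∀ n : ℕ, 2 ≤ n → f n = l n + μ n ∧ g n = -(l (n - 1) * μ n)) ∧
      (∀ n : ℕ, 1 ≤ n → a (n + 1) - l n * a n ≠ 0) := by
  set w := solution f g a₂ (-a₁)
  have hw : IsSolution f g w := isSolution_solution a₂ (-a₁)
  have hC₁ : casoratian a w 1 ≠ 0 := by
    have hC₁_eq : casoratian a w 1 = a₁ * a₁ + a₂ * a₂ := by
      simp only [casoratian, w, solution, ha1, ha2]
      ring
    rw [hC₁_eq]
    exact fun h0 => h (mul_self_add_mul_self_eq_zero.1 h0)
  have hC : ∀ n, 1 ≤ n → casoratian a w n ≠ 0 := fun n => casoratian_ne_zero hg hrec hw hC₁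
  obtain ⟨t, ht⟩ := exists_forall_add_mul_ne_zero (fun n => w (n + 1)) (fun n => a (n + 1))
    fun n => ne_zero_or_ne_zero_of_casoratian_ne_zero (hC (n + 1) (by omega))
  set q : ℕ → ℝ := fun n => w n + t * a n
  have hq₀ : ∀ n, 1 ≤ n → q n ≠ 0 := fun n hn => by
    obtain ⟨m, rfl⟩ := Nat.exists_eq_add_of_le' hn
    exact ht m
  refine ⟨fun n => q (n + 1) / q n, fun n => f n - q (n + 1) / q n,
    fun n hn => ⟨by ring, (hw.add_mul hrec t).factorization hq₀ hn⟩, fun n hn => ?_⟩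
  rw [sub_div_mul_eq_casoratian_div a (hq₀ n hn), casoratian_add_mul_self]
  exact div_ne_zero (hC n hn) (hq₀ n hn)
end
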